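/- arXiv:0705.1440 — 2 statements merged into one kernel-verified Lean document; each statement's English description precedes it below -/
import Mathlib

section
/- Let (X,d,δ) be a dilatation structure and A : X → X a linear transformation. Then: (a) for all x ∈ X, ε ∈ Γ with ν(ε) < 1, and u, v ∈ U(x) sufficiently close to x, A(Σ_ε^x(u,v)) = Σ_ε^{A(x)}(A(u), A(v)); (b) if the dilatation structure is strong, then for all x ∈ X and u ∈ U(x) sufficiently close to x, A(inv^x(u)) = inv^{A(x)}(A(u)). -/
open Metric Set

/-- A dilatation structure `(X,d,δ)` in the sense of Buliga.  `Γ` is a separated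
commutative topological group endowed with a continuous morphism `ν : Γ → (0,∞)`
with `inf ν(Γ) = 0`.  For every point `x` and every `ε ∈ Γ` with `ν ε ≤ 1` the
dilatation `δ ε x` is a homeomorphism from an open neighbourhood `U x` of `x`
onto an open neighbourhood `V ε x` of `x`, subject to the axioms A0–A3. -/
structure DilatationStructure (Γ : Type*) [CommGroup Γ] [TopologicalSpace Γ]
    (X : Type*) [MetricSpace X] where
  /-- the morphism `ν : Γ → (0,∞)` -/
  ν : Γ → ℝ
  ν_pos : ∀ ε, 0 < ν ε
  ν_mul : ∀ ε μ, ν (ε * μ) = ν ε * ν μ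
  ν_cont : Continuous ν
  ν_inf : ∀ a : ℝ, 0 < a → ∃ ε, ν ε < a
  /-- the dilatations: `δ ε x y` is `δ_ε^x y` -/
  δ : Γ → X → X → X
  U : X → Set X
  V : Γ → X → Set X
  W : Γ → X → Set X
  rA : ℝ
  rB : ℝ
  one_lt_rB : 1 < rB
  rB_le_rA : rB ≤ rA
  U_open : ∀ x, IsOpen (U x)
  U_mem : ∀ x, x ∈ U x
  V_open : ∀ ε x, ν ε ≤ 1 → IsOpen (V ε x)
  V_mem : ∀ ε x, ν ε ≤ 1 → x ∈ V ε x
  -- A0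
  closedBall_subset_U : ∀ x, closedBall x rA ⊆ U x
  δ_homeo : ∀ ε x, ν ε ≤ 1 →
    ContinuousOn (δ ε x) (U x) ∧ BijOn (δ ε x) (U x) (V ε x) ∧
      ContinuousOn (δ ε⁻¹ x) (V ε x)
  ball_subset_image : ∀ ε x, ν ε < 1 → ball x (ν ε) ⊆ δ ε x '' ball x rA
  image_subset_V : ∀ ε x, ν ε < 1 → δ ε x '' ball x rA ⊆ V ε x
  V_subset_U : ∀ ε x, ν ε ≤ 1 → V ε x ⊆ U x
  W_nhds : ∀ ε x, 1 < ν ε → W ε x ∈ nhds x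
  V_subset_W : ∀ ε x, ν ε < 1 → V ε x ⊆ W ε⁻¹ x
  δ_injOn_W : ∀ ε x, 1 < ν ε → InjOn (δ ε x) (W ε x)
  δ_image_W : ∀ ε x, 1 < ν ε → δ ε x '' W ε x ⊆ ball x rB
  δ_inv : ∀ ε x, ν ε ≤ 1 → ∀ u ∈ U x, δ ε⁻¹ x (δ ε x u) = u
  domain_tech : ∀ K : Set X, IsCompact K → ∃ R > 0, ∃ ε₀ ∈ Ioo (0:ℝ) 1,
    ∀ x ∈ K, ∀ u ∈ closedBall x R, ∀ v ∈ closedBall x R, ∀ ε : Γ, ν ε < ε₀ →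
      δ ε x v ∈ W ε⁻¹ (δ ε x u)
  -- A1
  δ_base : ∀ ε x, ν ε ≤ 1 → δ ε x x = x
  δ_one : ∀ x y, δ 1 x y = y
  δ_cont : ContinuousOn (fun p : Γ × X × X => δ p.1 p.2.1 p.2.2)
    {p : Γ × X × X | ν p.1 ≤ 1 ∧ p.2.2 ∈ U p.2.1}
  δ_tendsto_zero : ∀ x : X, ∀ y ∈ U x, ∀ η > 0, ∃ θ > 0, ∀ ε : Γ, ν ε < θ →
    dist (δ ε x y) x < η
  -- A2
  δ_comp : ∀ ε μ x, ν ε ≤ 1 → ν μ ≤ 1 → ∀ u ∈ closedBall x rA,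
    δ ε x (δ μ x u) = δ (ε * μ) x u
  -- A3 : the limit distances `d^x`
  dx : X → X → X → ℝ
  dx_lim : ∀ K : Set X, IsCompact K → ∀ η > 0, ∃ θ > 0, ∀ ε : Γ, ν ε < θ →
    ∀ x ∈ K, ∀ u ∈ closedBall x rA, ∀ v ∈ closedBall x rA,
      |(1 / ν ε) * dist (δ ε x u) (δ ε x v) - dx x u v| < η
  dx_nondegenerate : ∀ x : X, ∀ u ∈ closedBall x rA, ∀ v ∈ closedBall x rA,
    dx x u v = 0 → u = v

namespace DilatationStructure

variable {Γ : Type*} [CommGroup Γ] [TopologicalSpace Γ] {X : Type*} [MetricSpace X]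

/-- the difference operation `Δ_ε^x(u,v) = δ_{ε⁻¹}^{δ_ε^x u} δ_ε^x v` -/
def difOp (D : DilatationStructure Γ X) (ε : Γ) (x u v : X) : X :=
  D.δ ε⁻¹ (D.δ ε x u) (D.δ ε x v)

/-- the sum operation `Σ_ε^x(u,v) = δ_{ε⁻¹}^x δ_ε^{δ_ε^x u} v` -/
def sumOp (D : DilatationStructure Γ X) (ε : Γ) (x u v : X) : X :=
  D.δ ε⁻¹ x (D.δ ε (D.δ ε x u) v)

/-- the inverse operation `inv_ε^x(u) = δ_{ε⁻¹}^{δ_ε^x u} x` -/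
def invOp (D : DilatationStructure Γ X) (ε : Γ) (x u : X) : X :=
  D.δ ε⁻¹ (D.δ ε x u) x

/-- A dilatation structure is linear if `δ_ε^x δ_μ^y z = δ_μ^{δ_ε^x y} δ_ε^x z`
for sufficiently closed `x, y, z`. -/
def IsLinear (D : DilatationStructure Γ X) : Prop :=
  ∀ K : Set X, IsCompact K → ∃ C > 0, ∀ ε μ : Γ, D.ν ε ≤ 1 → D.ν μ ≤ 1 →
    ∀ x ∈ K, ∀ y ∈ K, ∀ z ∈ K,
      dist x y ≤ C → dist x z ≤ C → dist y z ≤ C →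
        D.δ ε x (D.δ μ y z) = D.δ μ (D.δ ε x y) (D.δ ε x z)

/-- A transformation `A : X → X` is linear (w.r.t. a dilatation structure) if it is
Lipschitz and commutes with dilatations. -/
def IsLinearTransform (D : DilatationStructure Γ X) (A : X → X) : Prop :=
  (∃ C : NNReal, LipschitzWith C A) ∧
  ∀ x : X, ∀ u ∈ D.U x, ∀ ε : Γ, D.ν ε < 1 → A u ∈ D.U (A x) →
    A (D.δ ε x u) = D.δ ε (A x) (A u)

end DilatationStructure

/-- A strong dilatation structure: a dilatation structure satisfying in addition
axiom A4, the uniform convergence of `Δ_ε^x(u,v)` (hence also of `Σ_ε^x(u,v)` and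
`inv_ε^x(u)`) as `ε → 0`. -/
structure StrongDilatationStructure (Γ : Type*) [CommGroup Γ] [TopologicalSpace Γ]
    (X : Type*) [MetricSpace X] extends DilatationStructure Γ X where
  /-- `Δ^x(u,v)` -/
  difLim : X → X → X → X
  /-- `Σ^x(u,v)` -/
  sumLim : X → X → X → X
  /-- `inv^x(u)` -/
  invLim : X → X → X
  dif_conv : ∀ K : Set X, IsCompact K → ∃ R > 0, ∀ η > 0, ∃ θ > 0, ∀ ε : Γ, ν ε < θ →
    ∀ x ∈ K, ∀ u ∈ closedBall x R, ∀ v ∈ closedBall x R,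
      dist (δ ε⁻¹ (δ ε x u) (δ ε x v)) (difLim x u v) < η
  sum_conv : ∀ K : Set X, IsCompact K → ∃ R > 0, ∀ η > 0, ∃ θ > 0, ∀ ε : Γ, ν ε < θ →
    ∀ x ∈ K, ∀ u ∈ closedBall x R, ∀ v ∈ closedBall x R,
      dist (δ ε⁻¹ x (δ ε (δ ε x u) v)) (sumLim x u v) < η
  inv_conv : ∀ K : Set X, IsCompact K → ∃ R > 0, ∀ η > 0, ∃ θ > 0, ∀ ε : Γ, ν ε < θ →
    ∀ x ∈ K, ∀ u ∈ closedBall x R,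
      dist (δ ε⁻¹ (δ ε x u) x) (invLim x u) < η

variable {Γ : Type*} [CommGroup Γ] [TopologicalSpace Γ] {X : Type*} [MetricSpace X]

/-
A linear transformation commutes with `δ_ε^x` at every `u` with `u ∈ U x` and `A u ∈ U (A x)`,
hence with `δ_{ε⁻¹}^x` at every `δ_ε^x s` for such an `s`; unfolding `Σ_ε` and `inv_ε`, both
identities follow once all intermediate points are close enough to their base points. On a
compact set, axiom A3 makes `δ_ε^z` contract distances to `z` by a factor comparable to `ν ε`
and cover the ball of radius comparable to `ν ε` by images of nearby points. This gives the
needed closeness as long as the base point `δ_ε^x u` of the inner dilatation lies in the compact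
set too. It need not lie in `K`; but along a sequence of counterexamples with `dist u x → 0`
these base points converge together with a subsequence of the `x`'s, hence lie in one larger
compact set, a contradiction. Part (b) passes to the limit `ε → 0` in the identity for `inv_ε`,
using the continuity of `A`.
-/

open Filter Topology

theorem isCompact_insert_iUnion_of_eventually_subset {Y ι : Type*} [TopologicalSpace Y]
    {S : ι → Set Y} (hS : ∀ i, IsCompact (S i)) {a : Y}
    (h : ∀ s ∈ 𝓝 a, ∀ᶠ i in cofinite, S i ⊆ s) : IsCompact (insert a (⋃ i, S i)) := by
  intro l _ hle
  by_cases ha : ClusterPt a l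
  · exact ⟨a, mem_insert a _, ha⟩
  obtain ⟨s, hs, t, ht, hst⟩ := Filter.disjoint_iff.1 (clusterPt_iff_not_disjoint.not_left.1 ha)
  have hfar : ⋃ i ∈ {i | ¬S i ⊆ s}, S i ∈ l := by
    filter_upwards [ht, le_principal_iff.1 hle] with y hyt hy
    obtain rfl | hy := hy
    · exact absurd rfl (hst.ne_of_mem (mem_of_mem_nhds hs) hyt)
    obtain ⟨i, hi⟩ := mem_iUnion.1 hy
    exact mem_biUnion (fun hsub => hst.ne_of_mem (hsub hi) hyt rfl) hi
  obtain ⟨y, hy, hyl⟩ :=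
    (eventually_cofinite.1 (h s hs)).isCompact_biUnion (fun i _ => hS i) (le_principal_iff.2 hfar)
  exact ⟨y, mem_insert_of_mem _ (iUnion₂_subset_iUnion _ _ hy), hyl⟩

theorem exists_isCompact_frequently_subset {K : Set X} (hK : IsCompact K) {x : ℕ → X}
    (hx : ∀ n, x n ∈ K) {S : ℕ → Set X} (hS : ∀ n, IsCompact (S n)) {r : ℕ → ℝ}
    (hr : Tendsto r atTop (𝓝 0)) (hSr : ∀ n, S n ⊆ closedBall (x n) (r n)) :
    ∃ K', IsCompact K' ∧ K ⊆ K' ∧ ∃ᶠ n in atTop, S n ⊆ K' := by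
  obtain ⟨a, -, φ, hφ, hxa⟩ := hK.tendsto_subseq hx
  refine ⟨K ∪ insert a (⋃ n, S (φ n)),
    hK.union (isCompact_insert_iUnion_of_eventually_subset (fun n => hS (φ n)) ?_),
    subset_union_left, hφ.tendsto_atTop.frequently (Frequently.of_forall fun n => ?_)⟩
  · intro s hs
    obtain ⟨ρ, hρ, hρs⟩ := Metric.mem_nhds_iff.1 hs
    have hrad : Tendsto (fun n => r (φ n) + dist (x (φ n)) a) atTop (𝓝 0) := by
      simpa using (hr.comp hφ.tendsto_atTop).add (tendsto_iff_dist_tendsto_zero.1 hxa)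
    rw [Nat.cofinite_eq_atTop]
    filter_upwards [hrad.eventually (gt_mem_nhds hρ)] with n hn
    exact (hSr (φ n)).trans ((closedBall_subset_ball' hn).trans hρs)
  · exact (subset_iUnion (fun n => S (φ n)) n).trans
      ((subset_insert _ _).trans subset_union_right)

theorem exists_pos_forall_mul_le {T k : ℝ} (hT : 0 < T) (hk : 0 < k) :
    ∃ ρ > 0, ∀ c ≤ k, c * ρ ≤ T :=
  ⟨T / k, by positivity, fun c hc => (mul_le_mul_of_nonneg_right hc (by positivity)).trans_eq
    (mul_div_cancel₀ T hk.ne')⟩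

theorem tendsto_const_div_add_one_atTop_nhds_zero (θ : ℝ) :
    Tendsto (fun n : ℕ => θ / (n + 1)) atTop (𝓝 0) := by
  simpa [div_eq_mul_inv] using tendsto_one_div_add_atTop_nhds_zero_nat.const_mul θ

namespace DilatationStructure

variable {D : DilatationStructure Γ X} {A : X → X}

lemma one_lt_rA (D : DilatationStructure Γ X) : 1 < D.rA :=
  D.one_lt_rB.trans_le D.rB_le_rA

lemma mem_U_of_dist_le {x u : X} (h : dist u x ≤ D.rA) : u ∈ D.U x :=
  D.closedBall_subset_U x (mem_closedBall.2 h)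

lemma map_mem_U_of_lipschitzWith {L : NNReal} (hL : LipschitzWith L A) {x u : X} {r : ℝ}
    (hu : dist u x ≤ r) (hr : (L + 1) * r ≤ D.rA) : A u ∈ D.U (A x) := by
  refine D.mem_U_of_dist_le ((hL.dist_le_mul u x).trans ?_)
  nlinarith [dist_nonneg (x := u) (y := x), L.2]

lemma ν_one (D : DilatationStructure Γ X) : D.ν 1 = 1 :=
  (mul_eq_left₀ (D.ν_pos 1).ne').1 (by rw [← D.ν_mul, mul_one])

lemma ν_pow (ε : Γ) (n : ℕ) : D.ν (ε ^ n) = D.ν ε ^ n := by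
  induction n with
  | zero => rw [pow_zero, pow_zero, D.ν_one]
  | succ n ih => rw [pow_succ, pow_succ, D.ν_mul, ih]

lemma exists_ν_btwn {a b : ℝ} {g : Γ} (hg : D.ν g < 1) (hb₀ : 0 < b) (hb₁ : b ≤ 1)
    (h : a < b * D.ν g) : ∃ μ, a < D.ν μ ∧ D.ν μ < b := by
  obtain ⟨n, hn⟩ := exists_pow_btwn_of_lt_mul h hb₀ hb₁ (D.ν_pos g) hg
  exact ⟨g ^ n, D.ν_pow g n ▸ hn⟩

lemma exists_seq_ν_tendsto_zero (D : DilatationStructure Γ X) :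
    ∃ e : ℕ → Γ, (∀ k, D.ν (e k) < 1) ∧ Tendsto (D.ν ∘ e) atTop (𝓝 0) := by
  choose e he using fun k : ℕ => D.ν_inf (1 / (k + 1)) (by positivity)
  refine ⟨e, fun k => (he k).trans_le ?_, squeeze_zero (fun k => (D.ν_pos (e k)).le)
    (fun k => (he k).le) tendsto_one_div_add_atTop_nhds_zero_nat⟩
  rw [div_le_one (by positivity)]
  linarith [k.cast_nonneg (α := ℝ)]

lemma tendsto_δ {ι : Type*} {l : Filter ι} {e : ι → Γ} (he : Tendsto (D.ν ∘ e) l (𝓝 0))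
    {z w : X} (hw : w ∈ D.U z) : Tendsto (fun i => D.δ (e i) z w) l (𝓝 z) :=
  Metric.tendsto_nhds.2 fun η hη => by
    obtain ⟨θ, hθ, h⟩ := D.δ_tendsto_zero z w hw η hη
    exact (he.eventually (gt_mem_nhds hθ)).mono fun i hi => h _ hi

/-- Below scale `θ`, both `dist (δ (ε * μ) z w) z / ν ε` and `dist (δ μ z w) z` are within
`ν μ` of `ν μ * d^z(w, z)` (axiom A3). -/
def ApproxHomogeneousOn (D : DilatationStructure Γ X) (K : Set X) (θ : ℝ) : Prop :=
  ∀ z ∈ K, ∀ w ∈ closedBall z D.rA, ∀ ε μ : Γ, D.ν ε ≤ 1 → D.ν μ < θ →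
    |dist (D.δ (ε * μ) z w) z / D.ν ε - dist (D.δ μ z w) z| < 2 * D.ν μ

lemma exists_approxHomogeneousOn {K : Set X} (hK : IsCompact K) :
    ∃ θ > 0, θ ≤ 1 ∧ D.ApproxHomogeneousOn K θ := by
  obtain ⟨θ, hθ, hdx⟩ := D.dx_lim K hK 1 one_pos
  refine ⟨min θ 1, by positivity, min_le_right _ _, fun z hz w hw ε μ hε hμ => ?_⟩
  have hμθ : D.ν μ < θ := hμ.trans_le (min_le_left _ _)
  have hμ1 : D.ν μ ≤ 1 := (hμ.trans_le (min_le_right _ _)).le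
  have hμ0 := D.ν_pos μ
  have hεμ : D.ν (ε * μ) = D.ν ε * D.ν μ := D.ν_mul ε μ
  have hzz : z ∈ closedBall z D.rA := mem_closedBall_self (by linarith [D.one_lt_rA])
  have h₁ := hdx μ hμθ z hz w hw z hzz
  have h₂ := hdx (ε * μ) (hεμ ▸ (mul_le_of_le_one_left hμ0.le hε).trans_lt hμθ) z hz w hw z hzz
  rw [D.δ_base μ z hμ1] at h₁
  rw [D.δ_base (ε * μ) z (hεμ ▸ mul_le_one₀ hε hμ0.le hμ1), hεμ] at h₂
  have hrescale : dist (D.δ (ε * μ) z w) z / D.ν ε - dist (D.δ μ z w) z =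
      D.ν μ * (1 / (D.ν ε * D.ν μ) * dist (D.δ (ε * μ) z w) z -
        1 / D.ν μ * dist (D.δ μ z w) z) := by
    field_simp
  rw [hrescale, abs_mul, abs_of_pos hμ0, mul_comm 2]
  refine mul_lt_mul_of_pos_left ?_ hμ0
  rw [abs_lt] at h₁ h₂ ⊢
  constructor <;> linarith

namespace ApproxHomogeneousOn

variable {K : Set X} {θ : ℝ} {g ε : Γ} {z : X}

lemma dist_δ_le (hc : D.ApproxHomogeneousOn K θ) (hθ : θ ≤ 1) (hg : D.ν g < 1) (hz : z ∈ K)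
    (hε : D.ν ε ≤ 1) {w : X} (hw : dist w z ≤ D.ν g * θ / 4) :
    dist (D.δ ε z w) z ≤ D.ν ε * ((1 + 4 / D.ν g) * dist w z) := by
  obtain hd | hd := (dist_nonneg (x := w) (y := z)).eq_or_lt
  · rw [← hd, dist_eq_zero.1 hd.symm, D.δ_base ε z hε, dist_self, mul_zero, mul_zero]
  have hg0 := D.ν_pos g
  have hb : 2 * dist w z / D.ν g ≤ θ / 2 := by
    rw [div_le_iff₀ hg0]
    linarith
  obtain ⟨μ, hwμ, hμ⟩ := D.exists_ν_btwn hg (a := dist w z) (b := 2 * dist w z / D.ν g)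
    (by positivity) (by linarith) (by rw [div_mul_cancel₀ _ hg0.ne']; linarith)
  have hμ1 : D.ν μ < 1 := by linarith
  obtain ⟨w', hw', rfl⟩ := D.ball_subset_image μ z hμ1 (mem_ball.2 hwμ)
  have hw'c := ball_subset_closedBall hw'
  have hclose := (abs_lt.1 (hc z hz w' hw'c ε μ hε (by linarith))).2
  rw [D.δ_comp ε μ z hε hμ1.le w' hw'c]
  have hε0 := D.ν_pos ε
  have h4 : 4 * dist (D.δ μ z w') z / D.ν g = 2 * (2 * dist (D.δ μ z w') z / D.ν g) := by ring
  calc dist (D.δ (ε * μ) z w') z = D.ν ε * (dist (D.δ (ε * μ) z w') z / D.ν ε) := by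
        field_simp
    _ ≤ D.ν ε * ((1 + 4 / D.ν g) * dist (D.δ μ z w') z) := by
        gcongr
        rw [add_mul, one_mul, div_mul_eq_mul_div]
        linarith

lemma exists_δ_eq (hc : D.ApproxHomogeneousOn K θ) (hθ : θ ≤ 1) (hg : D.ν g < 1) (hz : z ∈ K)
    (hε : D.ν ε ≤ 1) {P : X} (hP : dist P z ≤ D.ν ε * (D.ν g * θ / 4)) :
    ∃ s ∈ D.U z, D.δ ε z s = P ∧ D.ν ε * dist s z ≤ (1 + 4 / D.ν g) * dist P z := by
  obtain hd | hd := (dist_nonneg (x := P) (y := z)).eq_or_lt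
  · obtain rfl := dist_eq_zero.1 hd.symm
    exact ⟨P, D.U_mem P, D.δ_base ε P hε, by simp⟩
  have hg0 := D.ν_pos g
  have hε0 := D.ν_pos ε
  set q := dist P z / D.ν ε with hq
  have hq0 : 0 < q := div_pos hd hε0
  have hqθ : 2 * q / D.ν g ≤ θ / 2 := by
    rw [div_le_iff₀ hg0]
    linarith [(div_le_iff₀' hε0).2 hP]
  obtain ⟨μ, hqμ, hμ⟩ := D.exists_ν_btwn hg (a := q) (b := 2 * q / D.ν g)
    (by positivity) (by linarith) (by rw [div_mul_cancel₀ _ hg0.ne']; linarith)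
  have hμ1 : D.ν μ < 1 := by linarith
  have hεμ : D.ν (ε * μ) = D.ν ε * D.ν μ := D.ν_mul ε μ
  have hεμ1 : D.ν (ε * μ) < 1 :=
    hεμ ▸ (mul_le_of_le_one_left (D.ν_pos μ).le hε).trans_lt hμ1
  obtain ⟨w, hw, hwP⟩ := D.ball_subset_image (ε * μ) z hεμ1
    (mem_ball.2 (hεμ ▸ (div_lt_iff₀' hε0).1 hqμ))
  have hwc := ball_subset_closedBall hw
  refine ⟨D.δ μ z w, D.V_subset_U μ z hμ1.le (D.image_subset_V μ z hμ1 ⟨w, hw, rfl⟩),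
    by rw [D.δ_comp ε μ z hε hμ1.le w hwc, hwP], ?_⟩
  have hclose := (abs_lt.1 (hc z hz w hwc ε μ hε (by linarith [D.ν_pos μ]))).1
  rw [hwP, ← hq] at hclose
  have h4 : 4 * q / D.ν g = 2 * (2 * q / D.ν g) := by ring
  calc D.ν ε * dist (D.δ μ z w) z ≤ D.ν ε * ((1 + 4 / D.ν g) * q) := by
        gcongr
        rw [add_mul, one_mul, div_mul_eq_mul_div]
        linarith
    _ = (1 + 4 / D.ν g) * dist P z := by rw [hq]; field_simp

end ApproxHomogeneousOn

lemma exists_uniform_δ_bounds {K : Set X} (hK : IsCompact K) :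
    ∃ M ≥ 1, ∃ θ > 0,
      (∀ z ∈ K, ∀ ε, D.ν ε ≤ 1 → ∀ w, dist w z ≤ θ →
        dist (D.δ ε z w) z ≤ D.ν ε * (M * dist w z)) ∧
      (∀ z ∈ K, ∀ ε, D.ν ε ≤ 1 → ∀ P, dist P z ≤ D.ν ε * θ →
        ∃ s ∈ D.U z, D.δ ε z s = P ∧ D.ν ε * dist s z ≤ M * dist P z) := by
  obtain ⟨θ, hθ, hθ1, hc⟩ := exists_approxHomogeneousOn (D := D) hK
  obtain ⟨g, hg⟩ := D.ν_inf 1 one_pos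
  have hg0 := D.ν_pos g
  exact ⟨1 + 4 / D.ν g, le_add_of_nonneg_right (by positivity), D.ν g * θ / 4, by positivity,
    fun z hz ε hε w hw => hc.dist_δ_le hθ1 hg hz hε hw,
    fun z hz ε hε P hP => hc.exists_δ_eq hθ1 hg hz hε hP⟩

namespace IsLinearTransform

variable {ε : Γ} {x u : X}

lemma map_δ_inv (hA : D.IsLinearTransform A) (hε : D.ν ε < 1) {s : X} (hs : s ∈ D.U x)
    (hAs : A s ∈ D.U (A x)) : A (D.δ ε⁻¹ x (D.δ ε x s)) = D.δ ε⁻¹ (A x) (A (D.δ ε x s)) := by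
  rw [hA.2 x s hs ε hε hAs, D.δ_inv ε x hε.le s hs, D.δ_inv ε (A x) hε.le _ hAs]

lemma map_sumOp (hA : D.IsLinearTransform A) (hε : D.ν ε < 1) (hu : u ∈ D.U x)
    (hAu : A u ∈ D.U (A x)) {v : X} (hv : v ∈ D.U (D.δ ε x u))
    (hAv : A v ∈ D.U (A (D.δ ε x u))) {s : X} (hs : s ∈ D.U x) (hAs : A s ∈ D.U (A x))
    (hsv : D.δ ε x s = D.δ ε (D.δ ε x u) v) :
    A (D.sumOp ε x u v) = D.sumOp ε (A x) (A u) (A v) := by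
  rw [sumOp, sumOp, ← hA.2 x u hu ε hε hAu, ← hA.2 _ v hv ε hε hAv, ← hsv,
    hA.map_δ_inv hε hs hAs]

lemma map_invOp (hA : D.IsLinearTransform A) (hε : D.ν ε < 1) (hu : u ∈ D.U x)
    (hAu : A u ∈ D.U (A x)) {p : X} (hp : p ∈ D.U (D.δ ε x u))
    (hAp : A p ∈ D.U (A (D.δ ε x u))) (hpx : D.δ ε (D.δ ε x u) p = x) :
    A (D.invOp ε x u) = D.invOp ε (A x) (A u) := by
  have h := hA.map_δ_inv hε hp hAp
  rw [hpx] at h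
  rwa [invOp, invOp, ← hA.2 x u hu ε hε hAu]

end IsLinearTransform

lemma map_sumOp_eq_of_mem (hA : D.IsLinearTransform A) {K : Set X} (hK : IsCompact K) :
    ∃ ρ > 0, ∀ ε, D.ν ε < 1 → ∀ x ∈ K, ∀ u v, u ∈ D.U x → dist u x ≤ ρ → dist v x ≤ ρ →
      D.δ ε x u ∈ K → A (D.sumOp ε x u v) = D.sumOp ε (A x) (A u) (A v) := by
  obtain ⟨L, hL⟩ := hA.1
  obtain ⟨M, hM, θ, hθ, hδ, hδ_eq⟩ := D.exists_uniform_δ_bounds hK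
  have hM2 : M ≤ M ^ 2 := le_self_pow₀ hM two_ne_zero
  have hM3 : M ^ 2 ≤ M ^ 3 := pow_le_pow_right₀ hM (by norm_num)
  have hT : 0 < min θ D.rA := lt_min hθ (by linarith [D.one_lt_rA])
  have hTθ : min θ D.rA ≤ θ := min_le_left _ _
  have hTrA : min θ D.rA ≤ D.rA := min_le_right _ _
  obtain ⟨ρ, hρ, small⟩ :=
    exists_pos_forall_mul_le hT (k := 3 * M ^ 3 * (L + 1)) (by positivity)
  have h1 := small 1 (by nlinarith)
  have h2 := small (2 * M) (by nlinarith)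
  have h3 := small (3 * M ^ 2) (by nlinarith)
  have h4 := small ((L + 1) * 1) (by nlinarith)
  have h5 := small ((L + 1) * (2 * M)) (by nlinarith)
  have h6 := small ((L + 1) * (3 * M ^ 3)) (by nlinarith)
  refine ⟨ρ, hρ, fun ε hε x hx u v hu hux hvx hy => ?_⟩
  have hε0 := D.ν_pos ε
  set y := D.δ ε x u
  set P := D.δ ε y v
  have hyx : dist y x ≤ D.ν ε * (M * ρ) := (hδ x hx ε hε.le u (by linarith)).trans (by gcongr)
  have hvy : dist v y ≤ 2 * M * ρ := by
    have := dist_triangle v x y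
    have : D.ν ε * (M * ρ) ≤ M * ρ := mul_le_of_le_one_left (by positivity) hε.le
    have : ρ ≤ M * ρ := le_mul_of_one_le_left hρ.le hM
    rw [dist_comm x y] at *
    linarith
  have hPx : dist P x ≤ D.ν ε * (3 * M ^ 2 * ρ) := by
    have hPy : dist P y ≤ D.ν ε * (M * dist v y) := hδ y hy ε hε.le v (by linarith)
    have : D.ν ε * (M * dist v y) ≤ D.ν ε * (M * (2 * M * ρ)) := by gcongr
    have : D.ν ε * (M * ρ) ≤ D.ν ε * (M ^ 2 * ρ) := by gcongr
    have := dist_triangle P y x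
    linarith
  obtain ⟨s, hs, hsP, hsx⟩ := hδ_eq x hx ε hε.le P (hPx.trans (by gcongr; linarith))
  have hsx' : dist s x ≤ 3 * M ^ 3 * ρ := by
    refine le_of_mul_le_mul_left ?_ hε0
    calc D.ν ε * dist s x ≤ M * dist P x := hsx
      _ ≤ M * (D.ν ε * (3 * M ^ 2 * ρ)) := by gcongr
      _ = D.ν ε * (3 * M ^ 3 * ρ) := by ring
  exact hA.map_sumOp hε hu (D.map_mem_U_of_lipschitzWith hL hux (by linarith))
    (D.mem_U_of_dist_le (by linarith)) (D.map_mem_U_of_lipschitzWith hL hvy (by linarith))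
    hs (D.map_mem_U_of_lipschitzWith hL hsx' (by linarith)) hsP

lemma map_invOp_eq_of_mem (hA : D.IsLinearTransform A) {K : Set X} (hK : IsCompact K) :
    ∃ ρ > 0, ∀ ε, D.ν ε < 1 → ∀ x ∈ K, ∀ u ∈ D.U x, dist u x ≤ ρ →
      D.δ ε x u ∈ K → A (D.invOp ε x u) = D.invOp ε (A x) (A u) := by
  obtain ⟨L, hL⟩ := hA.1
  obtain ⟨M, hM, θ, hθ, hδ, hδ_eq⟩ := D.exists_uniform_δ_bounds hK
  have hM2 : M ≤ M ^ 2 := le_self_pow₀ hM two_ne_zero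
  have hT : 0 < min θ D.rA := lt_min hθ (by linarith [D.one_lt_rA])
  have hTθ : min θ D.rA ≤ θ := min_le_left _ _
  have hTrA : min θ D.rA ≤ D.rA := min_le_right _ _
  obtain ⟨ρ, hρ, small⟩ := exists_pos_forall_mul_le hT (k := M ^ 2 * (L + 1)) (by positivity)
  have h1 := small 1 (by nlinarith)
  have h2 := small M (by nlinarith)
  have h3 := small ((L + 1) * 1) (by nlinarith)
  have h4 := small ((L + 1) * M ^ 2) (by nlinarith)
  refine ⟨ρ, hρ, fun ε hε x hx u hu hux hy => ?_⟩
  have hε0 := D.ν_pos ε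
  set y := D.δ ε x u
  have hxy : dist x y ≤ D.ν ε * (M * ρ) :=
    dist_comm x y ▸ (hδ x hx ε hε.le u (by linarith)).trans (by gcongr)
  obtain ⟨p, hp, hpx, hpy⟩ := hδ_eq y hy ε hε.le x (hxy.trans (by gcongr; linarith))
  have hpy' : dist p y ≤ M ^ 2 * ρ := by
    refine le_of_mul_le_mul_left ?_ hε0
    calc D.ν ε * dist p y ≤ M * dist x y := hpy
      _ ≤ M * (D.ν ε * (M * ρ)) := by gcongr
      _ = D.ν ε * (M ^ 2 * ρ) := by ring
  exact hA.map_invOp hε hu (D.map_mem_U_of_lipschitzWith hL hux (by linarith)) hp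
    (D.map_mem_U_of_lipschitzWith hL hpy' (by linarith)) hpx

lemma exists_map_sumOp_eq (hA : D.IsLinearTransform A) {K : Set X} (hK : IsCompact K) :
    ∃ C > 0, ∀ ε, D.ν ε < 1 → ∀ x ∈ K, ∀ u v, u ∈ D.U x → dist u x ≤ C → dist v x ≤ C →
      A (D.sumOp ε x u v) = D.sumOp ε (A x) (A u) (A v) := by
  obtain ⟨M, hM, θ, hθ, hδ, -⟩ := D.exists_uniform_δ_bounds hK
  have hC := tendsto_const_div_add_one_atTop_nhds_zero θ
  by_contra! hbad
  choose ε hε x hx u v hu hux hvx hne using fun n : ℕ => hbad (θ / (n + 1)) (by positivity)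
  have hy : ∀ n, dist (D.δ (ε n) (x n) (u n)) (x n) ≤ M * (θ / (n + 1)) := fun n => by
    have hθn : θ / (n + 1) ≤ θ := div_le_self hθ.le (by linarith [n.cast_nonneg (α := ℝ)])
    calc _ ≤ D.ν (ε n) * (M * dist (u n) (x n)) :=
          hδ _ (hx n) _ (hε n).le _ ((hux n).trans hθn)
      _ ≤ 1 * (M * (θ / (n + 1))) := by gcongr; exacts [(hε n).le, hux n]
      _ = M * (θ / (n + 1)) := one_mul _
  obtain ⟨K', hK', hKK', hfreq⟩ := exists_isCompact_frequently_subset hK hx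
    (fun _ => isCompact_singleton) (by simpa using hC.const_mul M)
    fun n => singleton_subset_iff.2 (mem_closedBall.2 (hy n))
  obtain ⟨ρ, hρ, hloc⟩ := D.map_sumOp_eq_of_mem hA hK'
  obtain ⟨n, hn, hnρ⟩ := (hfreq.and_eventually (hC.eventually (ge_mem_nhds hρ))).exists
  exact hne n (hloc _ (hε n) _ (hKK' (hx n)) _ _ (hu n) ((hux n).trans hnρ) ((hvx n).trans hnρ)
    (singleton_subset_iff.1 hn))

end DilatationStructure

namespace StrongDilatationStructure

variable {D : StrongDilatationStructure Γ X} {A : X → X}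

lemma tendsto_invOp {K : Set X} (hK : IsCompact K) :
    ∃ R > 0, ∀ x ∈ K, ∀ u ∈ closedBall x R, ∀ e : ℕ → Γ, Tendsto (D.ν ∘ e) atTop (𝓝 0) →
      Tendsto (fun k => D.invOp (e k) x u) atTop (𝓝 (D.invLim x u)) := by
  obtain ⟨R, hR, hconv⟩ := D.inv_conv K hK
  refine ⟨R, hR, fun x hx u hu e he => Metric.tendsto_nhds.2 fun η hη => ?_⟩
  obtain ⟨θ, hθ, h⟩ := hconv η hη
  exact (he.eventually (gt_mem_nhds hθ)).mono fun k hk => h (e k) hk x hx u hu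

lemma map_invLim_eq_of_mem (hA : D.IsLinearTransform A) {K : Set X} (hK : IsCompact K)
    {e : ℕ → Γ} (he1 : ∀ k, D.ν (e k) < 1) (he0 : Tendsto (D.ν ∘ e) atTop (𝓝 0)) :
    ∃ ρ > 0, ∀ x ∈ K, ∀ u ∈ D.U x, dist u x ≤ ρ → (∀ k, D.δ (e k) x u ∈ K) →
      A (D.invLim x u) = D.invLim (A x) (A u) := by
  obtain ⟨L, hL⟩ := hA.1
  obtain ⟨ρ, hρ, hinv⟩ := D.map_invOp_eq_of_mem hA hK
  obtain ⟨R, hR, hlim⟩ := D.tendsto_invOp hK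
  obtain ⟨R', hR', hlim'⟩ := D.tendsto_invOp (hK.image hL.continuous)
  refine ⟨min ρ (min R (R' / (L + 1))), by positivity, fun x hx u hu hux hy => ?_⟩
  have hAux : dist (A u) (A x) ≤ R' := by
    calc dist (A u) (A x) ≤ L * dist u x := hL.dist_le_mul u x
      _ ≤ (L + 1) * (R' / (L + 1)) := by
        gcongr
        · linarith
        · exact hux.trans ((min_le_right _ _).trans (min_le_right _ _))
      _ = R' := mul_div_cancel₀ R' (by positivity)
  refine tendsto_nhds_unique ?_ (hlim' (A x) (mem_image_of_mem A hx) (A u)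
    (mem_closedBall.2 hAux) e he0)
  refine ((hL.continuous.tendsto _).comp (hlim x hx u (mem_closedBall.2 (hux.trans
    ((min_le_right _ _).trans (min_le_left _ _)))) e he0)).congr fun k => ?_
  exact hinv (e k) (he1 k) x hx u hu (hux.trans (min_le_left _ _)) (hy k)

lemma exists_map_invLim_eq (hA : D.IsLinearTransform A) {K : Set X} (hK : IsCompact K) :
    ∃ C > 0, ∀ x ∈ K, ∀ u ∈ D.U x, dist u x ≤ C →
      A (D.invLim x u) = D.invLim (A x) (A u) := by
  obtain ⟨M, hM, θ, hθ, hδ, -⟩ := D.exists_uniform_δ_bounds hK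
  obtain ⟨e, he1, he0⟩ := D.exists_seq_ν_tendsto_zero
  have hC := tendsto_const_div_add_one_atTop_nhds_zero θ
  by_contra! hbad
  choose x hx u hu hux hne using fun n : ℕ => hbad (θ / (n + 1)) (by positivity)
  set S := fun n => insert (x n) (range fun k => D.δ (e k) (x n) (u n))
  have hS : ∀ n, S n ⊆ closedBall (x n) (M * (θ / (n + 1))) := fun n => by
    have hθn : θ / (n + 1) ≤ θ := div_le_self hθ.le (by linarith [n.cast_nonneg (α := ℝ)])
    refine insert_subset (mem_closedBall_self (by positivity)) (range_subset_iff.2 fun k => ?_)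
    calc _ ≤ D.ν (e k) * (M * dist (u n) (x n)) :=
          hδ _ (hx n) _ (he1 k).le _ ((hux n).trans hθn)
      _ ≤ 1 * (M * (θ / (n + 1))) := by gcongr; exacts [(he1 k).le, hux n]
      _ = M * (θ / (n + 1)) := one_mul _
  obtain ⟨K', hK', hKK', hfreq⟩ := exists_isCompact_frequently_subset hK hx
    (fun n => (D.tendsto_δ he0 (hu n)).isCompact_insert_range) (by simpa using hC.const_mul M) hS
  obtain ⟨ρ, hρ, hloc⟩ := D.map_invLim_eq_of_mem hA hK' he1 he0
  obtain ⟨n, hn, hnρ⟩ := (hfreq.and_eventually (hC.eventually (ge_mem_nhds hρ))).exists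
  exact hne n (hloc _ (hKK' (hx n)) _ (hu n) ((hux n).trans hnρ)
    fun k => hn (mem_insert_of_mem _ ⟨k, rfl⟩))

end StrongDilatationStructure

/-- **Proposition.**  Let `(X,d,δ)` be a dilatation structure and `A : X → X` a linear
transformation.  Then (a) `A Σ_ε^x(u,v) = Σ_ε^{A x}(A u, A v)` for `u, v ∈ U(x)`
sufficiently close to `x`; and (b) if the dilatation structure is strong, then
`A inv^x(u) = inv^{A x}(A u)` for `u` sufficiently close to `x`. -/
theorem linear_transform_commutes_with_sum_and_inv
    (D : StrongDilatationStructure Γ X) (A : X → X)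
    (hA : D.toDilatationStructure.IsLinearTransform A) :
    (∀ K : Set X, IsCompact K → ∃ C > 0, ∀ ε : Γ, D.ν ε < 1 →
      ∀ x ∈ K, ∀ u ∈ K, ∀ v ∈ K,
        dist x u ≤ C → dist x v ≤ C → dist u v ≤ C → u ∈ D.U x → v ∈ D.U x →
          A (D.sumOp ε x u v) = D.sumOp ε (A x) (A u) (A v)) ∧
    (∀ K : Set X, IsCompact K → ∃ C > 0, ∀ x ∈ K, ∀ u ∈ K,
      dist x u ≤ C → u ∈ D.U x →
        A (D.invLim x u) = D.invLim (A x) (A u)) := by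
  refine ⟨fun K hK => ?_, fun K hK => ?_⟩
  · obtain ⟨C, hC, h⟩ := D.exists_map_sumOp_eq hA hK
    exact ⟨C, hC, fun ε hε x hx u _ v _ hxu hxv _ hu _ =>
      h ε hε x hx u v hu (dist_comm x u ▸ hxu) (dist_comm x v ▸ hxv)⟩
  · obtain ⟨C, hC, h⟩ := D.exists_map_invLim_eq hA hK
    exact ⟨C, hC, fun x hx u _ hxu hu => h x hx u hu (dist_comm x u ▸ hxu)⟩
end

section
/- Let (X,d,δ) be a strong dilatation structure and define the lack-of-linearity function Lin(x,y,z; ε, μ) = d( δ_ε^x δ_μ^y z , δ_μ^{δ_ε^x y} δ_ε^x z ). Then for any x, y, z ∈ X sufficiently closed, lim_{ε→0} (1/ν(ε)^2) Lin(x, δ_ε^x y, δ_ε^x z; ε, ε) = 0; that is, every strong dilatation structure is infinitesimally linear. -/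
open Metric Set

variable {Γ : Type*} [CommGroup Γ] [TopologicalSpace Γ] {X : Type*} [MetricSpace X]

/-- The quantity `Lin(x,y,z;ε,μ) = d(δ_ε^x δ_μ^y z, δ_μ^{δ_ε^x y} δ_ε^x z)`, measuring
the lack of linearity of a dilatation structure. -/
def DilatationStructure.lin (D : DilatationStructure Γ X) (x y z : X) (ε μ : Γ) : ℝ :=
  dist (D.δ ε x (D.δ μ y z)) (D.δ μ (D.δ ε x y) (D.δ ε x z))

/-!
Put `u = δ_ε^x y`, `v = δ_ε^x z`, `w = δ_ε^x u = δ_{ε²}^x y`, `h = δ_ε^x v = δ_{ε²}^x z`.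
Both points compared by `Lin` are `ε²`-dilations: `δ_ε^x δ_ε^u v = δ_{ε²}^x A` where
`δ_ε^x A = δ_ε^u v`, and `δ_ε^w h = δ_{ε²}^w B` where `δ_ε^w B = h`. Axiom A3 at the two scales
`ε` and `ε²` puts them within `ν(ε)² (d^x(A, y) + o(1))` and `ν(ε)² (d^w(B, w) + o(1))` of `w`,
and again by A3 `d^x(A, y) ≈ d(δ_ε^u v, u) / ν(ε) ≈ d^u(v, u)` and
`d^w(B, w) ≈ d(h, w) / ν(ε) = O(ν(ε))`, both of which tend to `0` since `u, v → x`.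
A3 is only uniform on compact sets, so the argument runs along sequences `εₙ → 0`: then the
moving base points `uₙ`, `wₙ` stay in the compact set `{x} ∪ {uₙ}`, resp. `{x} ∪ {wₙ}`.
-/

open Filter Topology Asymptotics

theorem exists_pos_forall_lt_of_forall_tendsto_comp {α : Type*} {ν f : α → ℝ}
    (hν : ∀ a, 0 ≤ ν a)
    (h : ∀ e : ℕ → α, Tendsto (ν ∘ e) atTop (𝓝 0) → Tendsto (f ∘ e) atTop (𝓝 0))
    {η : ℝ} (hη : 0 < η) : ∃ θ > 0, ∀ a, ν a < θ → f a < η := by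
  have hf : Tendsto f (comap ν (𝓝 0)) (𝓝 0) :=
    tendsto_iff_seq_tendsto.2 fun e he => h e (tendsto_comap_iff.1 he)
  obtain ⟨θ, hθ, hlt⟩ :=
    Metric.eventually_nhds_iff.1 (eventually_comap.1 (hf.eventually (gt_mem_nhds hη)))
  refine ⟨θ, hθ, fun a ha => hlt ?_ a rfl⟩
  rwa [Real.dist_0_eq_abs, abs_of_nonneg (hν a)]

namespace DilatationStructure

variable (T : DilatationStructure Γ X) {ι : Type*} {l : Filter ι} {ε : ι → Γ}

theorem ν_one_s17 : T.ν 1 = 1 :=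
  (mul_eq_left₀ (T.ν_pos 1).ne').1 (by rw [← T.ν_mul, one_mul])

theorem ν_inv (ε : Γ) : T.ν ε⁻¹ = (T.ν ε)⁻¹ :=
  eq_inv_of_mul_eq_one_left (by rw [← T.ν_mul, inv_mul_cancel, T.ν_one_s17])

theorem one_lt_ν_inv {ε : Γ} (hε : T.ν ε < 1) : 1 < T.ν ε⁻¹ := by
  rw [T.ν_inv]
  exact one_lt_inv₀ (T.ν_pos ε) |>.2 hε

theorem ν_mul_self (ε : Γ) : T.ν (ε * ε) = T.ν ε ^ 2 := by
  rw [T.ν_mul, sq]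

theorem tendsto_ν_mul_self (hε : Tendsto (fun i => T.ν (ε i)) l (𝓝 0)) :
    Tendsto (fun i => T.ν (ε i * ε i)) l (𝓝 0) := by
  simpa [T.ν_mul_self] using hε.pow 2

theorem rA_pos : 0 < T.rA :=
  one_pos.trans (T.one_lt_rB.trans_le T.rB_le_rA)

theorem δ_δ_inv_of_mem_ball {ε : Γ} (hε : T.ν ε < 1) {x q : X} (hq : q ∈ ball x (T.ν ε)) :
    T.δ ε⁻¹ x q ∈ ball x T.rA ∧ T.δ ε x (T.δ ε⁻¹ x q) = q := by
  obtain ⟨A, hA, rfl⟩ := T.ball_subset_image ε x hε hq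
  rw [T.δ_inv ε x hε.le A (T.closedBall_subset_U x (ball_subset_closedBall hA))]
  exact ⟨hA, rfl⟩

theorem δ_δ_inv_of_mem_W {ε : Γ} (hε : T.ν ε < 1) {w p : X} (hp : p ∈ T.W ε⁻¹ w) :
    T.δ ε⁻¹ w p ∈ ball w T.rB ∧ T.δ ε w (T.δ ε⁻¹ w p) = p := by
  have hε' : 1 < T.ν ε⁻¹ := T.one_lt_ν_inv hε
  have hB : T.δ ε⁻¹ w p ∈ ball w T.rB := T.δ_image_W ε⁻¹ w hε' ⟨p, hp, rfl⟩
  have hBA : T.δ ε⁻¹ w p ∈ ball w T.rA := ball_subset_ball T.rB_le_rA hB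
  refine ⟨hB, T.δ_injOn_W ε⁻¹ w hε' ?_ hp ?_⟩
  · exact T.V_subset_W ε w hε (T.image_subset_V ε w hε ⟨_, hBA, rfl⟩)
  · exact T.δ_inv ε w hε.le _ (T.closedBall_subset_U w (ball_subset_closedBall hBA))

theorem tendsto_δ_s17 (hε : Tendsto (fun i => T.ν (ε i)) l (𝓝 0)) {x y : X} (hy : y ∈ T.U x) :
    Tendsto (fun i => T.δ (ε i) x y) l (𝓝 x) := by
  refine Metric.tendsto_nhds.2 fun s hs => ?_
  obtain ⟨θ, hθ, H⟩ := T.δ_tendsto_zero x y hy s hs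
  filter_upwards [hε.eventually (gt_mem_nhds hθ)] with i hi using H _ hi

theorem tendsto_dist_δ_div_sub_dx {K : Set X} (hK : IsCompact K)
    (hε : Tendsto (fun i => T.ν (ε i)) l (𝓝 0)) {a p q : ι → X} (ha : ∀ᶠ i in l, a i ∈ K)
    (hp : ∀ᶠ i in l, p i ∈ closedBall (a i) T.rA) (hq : ∀ᶠ i in l, q i ∈ closedBall (a i) T.rA) :
    Tendsto (fun i => dist (T.δ (ε i) (a i) (p i)) (T.δ (ε i) (a i) (q i)) / T.ν (ε i) -
      T.dx (a i) (p i) (q i)) l (𝓝 0) := by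
  refine Metric.tendsto_nhds.2 fun η hη => ?_
  obtain ⟨θ, hθ, H⟩ := T.dx_lim K hK η hη
  filter_upwards [hε.eventually (gt_mem_nhds hθ), ha, hp, hq] with i hi hai hpi hqi
  rw [Real.dist_0_eq_abs, ← one_div_mul_eq_div]
  exact H _ hi _ hai _ hpi _ hqi

theorem tendsto_dist_δ_div {x y z : X} (hy : y ∈ closedBall x T.rA)
    (hz : z ∈ closedBall x T.rA) (hε : Tendsto (fun i => T.ν (ε i)) l (𝓝 0)) :
    Tendsto (fun i => dist (T.δ (ε i) x z) (T.δ (ε i) x y) / T.ν (ε i)) l (𝓝 (T.dx x z y)) := by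
  have := (T.tendsto_dist_δ_div_sub_dx isCompact_singleton hε (.of_forall fun _ => rfl)
    (.of_forall fun _ => hz) (.of_forall fun _ => hy)).add_const (T.dx x z y)
  simpa only [zero_add, sub_add_cancel] using this

theorem exists_pos_forall_dx_lt {K : Set X} (hK : IsCompact K) {s : ℝ} (hs : 0 < s) :
    ∃ r > 0, ∀ a ∈ K, ∀ b, dist b a < r → T.dx a b a < s := by
  obtain ⟨θ, hθ, H⟩ := T.dx_lim K hK (s / 2) (half_pos hs)
  obtain ⟨c, hc⟩ := T.ν_inf (min θ 1) (lt_min hθ one_pos)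
  have hc1 : T.ν c ≤ 1 := (hc.trans_le (min_le_right _ _)).le
  set S : Set (X × X) := {q | dist q.2 q.1 < T.rA}
  have hS : IsOpen S := isOpen_lt (continuous_snd.dist continuous_fst) continuous_const
  have hδc : ContinuousOn (fun q : X × X => T.δ c q.1 q.2) S :=
    T.δ_cont.comp (f := fun q : X × X => (c, q.1, q.2)) (by fun_prop) fun q hq =>
      ⟨hc1, T.closedBall_subset_U _ (mem_closedBall.2 (le_of_lt hq))⟩
  have hcont : ContinuousOn (fun q : X × X => dist (T.δ c q.1 q.2) q.1) S :=
    continuous_dist.comp_continuousOn (hδc.prodMk continuousOn_fst)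
  -- a uniform neighbourhood of the diagonal of `K` on which `δ_c^a b` stays close to `a`
  obtain ⟨r, hr, hsub⟩ :=
    (hK.image (continuous_id.prodMk continuous_id)).exists_thickening_subset_open
      (hcont.isOpen_inter_preimage hS (isOpen_Iio (a := T.ν c * (s / 2)))) (by
        rintro _ ⟨a, -, rfl⟩
        refine ⟨by simpa [S] using T.rA_pos, ?_⟩
        simp [T.δ_base c a hc1, T.ν_pos c, hs])
  refine ⟨r, hr, fun a ha b hb => ?_⟩
  obtain ⟨hbS, hδ⟩ : (a, b) ∈ S ∩ _ := hsub (Metric.mem_thickening_iff.2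
    ⟨(a, a), ⟨a, ha, rfl⟩, by simpa [Prod.dist_eq] using hb⟩)
  have := H c (hc.trans_le (min_le_left _ _)) a ha b (mem_closedBall.2 (le_of_lt hbS)) a
    (mem_closedBall_self T.rA_pos.le)
  rw [T.δ_base c a hc1, one_div_mul_eq_div] at this
  have hδ' : dist (T.δ c a b) a / T.ν c < s / 2 := (div_lt_iff₀' (T.ν_pos c)).2 hδ
  linarith [(abs_lt.1 this).1]

theorem isLittleO_dist_δ {K : Set X} (hK : IsCompact K)
    (hε : Tendsto (fun i => T.ν (ε i)) l (𝓝 0)) {a b : ι → X} (ha : ∀ᶠ i in l, a i ∈ K)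
    (hab : Tendsto (fun i => dist (b i) (a i)) l (𝓝 0)) :
    (fun i => dist (T.δ (ε i) (a i) (b i)) (a i)) =o[l] (fun i => T.ν (ε i)) := by
  rw [isLittleO_iff_tendsto fun i h => absurd h (T.ν_pos _).ne', Metric.tendsto_nhds]
  intro s hs
  obtain ⟨r, hr, hdx⟩ := T.exists_pos_forall_dx_lt hK (half_pos hs)
  have hb : ∀ᶠ i in l, dist (b i) (a i) < min r T.rA :=
    hab.eventually (gt_mem_nhds (lt_min hr T.rA_pos))
  have hbr : ∀ᶠ i in l, b i ∈ closedBall (a i) T.rA :=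
    hb.mono fun i hi => mem_closedBall.2 (hi.le.trans (min_le_right _ _))
  have hlim := Metric.tendsto_nhds.1 (T.tendsto_dist_δ_div_sub_dx hK hε ha hbr
    (.of_forall fun i => mem_closedBall_self T.rA_pos.le)) (s / 2) (half_pos hs)
  filter_upwards [hlim, hb, ha, hε.eventually (gt_mem_nhds one_pos)] with i hi hbi hai hν
  rw [T.δ_base _ _ hν.le, Real.dist_0_eq_abs] at hi
  have hdxi := hdx _ hai _ (hbi.trans_le (min_le_left _ _))
  rw [Real.dist_0_eq_abs, abs_of_nonneg (div_nonneg dist_nonneg (T.ν_pos _).le)]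
  linarith [(abs_lt.1 hi).2]

theorem eventually_mem_ball_ν {x y : X} (hy : y ∈ closedBall x T.rA) (hdx : T.dx x y x < 1)
    (hε : Tendsto (fun i => T.ν (ε i)) l (𝓝 0)) {q : ι → X}
    (hq : (fun i => dist (q i) (T.δ (ε i) x y)) =o[l] (fun i => T.ν (ε i))) :
    ∀ᶠ i in l, q i ∈ ball x (T.ν (ε i)) := by
  have hyx : Tendsto (fun i => dist (T.δ (ε i) x y) x / T.ν (ε i)) l (𝓝 (T.dx x y x)) := by
    refine (T.tendsto_dist_δ_div (mem_closedBall_self T.rA_pos.le) hy hε).congr' ?_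
    filter_upwards [hε.eventually (gt_mem_nhds one_pos)] with i hi
    rw [T.δ_base _ _ hi.le]
  have hlim := hq.tendsto_div_nhds_zero.add hyx
  rw [zero_add] at hlim
  filter_upwards [hlim.eventually (gt_mem_nhds hdx)] with i hi
  rw [mem_ball, ← div_lt_one (T.ν_pos _)]
  calc dist (q i) x / T.ν (ε i)
      ≤ (dist (q i) (T.δ (ε i) x y) + dist (T.δ (ε i) x y) x) / T.ν (ε i) :=
        div_le_div_of_nonneg_right (dist_triangle _ _ _) (T.ν_pos _).le
    _ < 1 := by rwa [add_div]

theorem isLittleO_dist_δ_δ {x y : X} (hy : y ∈ closedBall x T.rA) (hdx : T.dx x y x < 1)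
    (hε : Tendsto (fun i => T.ν (ε i)) l (𝓝 0)) {q : ι → X}
    (hq : (fun i => dist (q i) (T.δ (ε i) x y)) =o[l] (fun i => T.ν (ε i))) :
    (fun i => dist (T.δ (ε i) x (q i)) (T.δ (ε i) x (T.δ (ε i) x y))) =o[l]
      (fun i => T.ν (ε i) ^ 2) := by
  have hν : ∀ᶠ i in l, T.ν (ε i) < 1 := hε.eventually (gt_mem_nhds one_pos)
  have hx : ∀ᶠ i in l, (fun _ => x) i ∈ ({x} : Set X) := .of_forall fun _ => rfl
  have hy' : ∀ᶠ i in l, y ∈ closedBall x T.rA := .of_forall fun _ => hy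
  have hqx : ∀ᶠ i in l, q i ∈ ball x (T.ν (ε i)) := T.eventually_mem_ball_ν hy hdx hε hq
  set A := fun i => T.δ (ε i)⁻¹ x (q i)
  have hA : ∀ᶠ i in l, A i ∈ ball x T.rA ∧ T.δ (ε i) x (A i) = q i := by
    filter_upwards [hν, hqx] with i h1 h2 using T.δ_δ_inv_of_mem_ball h1 h2
  have hAr : ∀ᶠ i in l, A i ∈ closedBall x T.rA :=
    hA.mono fun i hi => ball_subset_closedBall hi.1
  have hdxA : Tendsto (fun i => T.dx x (A i) y) l (𝓝 0) := by
    have := hq.tendsto_div_nhds_zero.sub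
      (T.tendsto_dist_δ_div_sub_dx isCompact_singleton hε hx hAr hy')
    rw [sub_zero] at this
    refine this.congr' ?_
    filter_upwards [hA] with i hi
    rw [hi.2, sub_sub_cancel]
  have hlim := (T.tendsto_dist_δ_div_sub_dx isCompact_singleton (T.tendsto_ν_mul_self hε)
    hx hAr hy').add hdxA
  rw [zero_add] at hlim
  rw [isLittleO_iff_tendsto fun i h => absurd h (pow_pos (T.ν_pos _) 2).ne']
  refine hlim.congr' ?_
  filter_upwards [hν, hA, hAr] with i hi hAi hAri
  rw [← hAi.2, T.δ_comp _ _ _ hi.le hi.le _ hAri, T.δ_comp _ _ _ hi.le hi.le _ hy,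
    T.ν_mul_self, sub_add_cancel]

theorem isLittleO_dist_δ_of_mem_W {K : Set X} (hK : IsCompact K)
    (hε : Tendsto (fun i => T.ν (ε i)) l (𝓝 0)) {w h : ι → X} (hw : ∀ᶠ i in l, w i ∈ K)
    (hW : ∀ᶠ i in l, h i ∈ T.W (ε i)⁻¹ (w i))
    (hh : (fun i => dist (h i) (w i)) =o[l] (fun i => T.ν (ε i))) :
    (fun i => dist (T.δ (ε i) (w i) (h i)) (w i)) =o[l] (fun i => T.ν (ε i) ^ 2) := by
  have hν : ∀ᶠ i in l, T.ν (ε i) < 1 := hε.eventually (gt_mem_nhds one_pos)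
  set B := fun i => T.δ (ε i)⁻¹ (w i) (h i)
  have hB : ∀ᶠ i in l, B i ∈ ball (w i) T.rB ∧ T.δ (ε i) (w i) (B i) = h i := by
    filter_upwards [hν, hW] with i h1 h2 using T.δ_δ_inv_of_mem_W h1 h2
  have hBr : ∀ᶠ i in l, B i ∈ closedBall (w i) T.rA :=
    hB.mono fun i hi => ball_subset_closedBall (ball_subset_ball T.rB_le_rA hi.1)
  have hwr : ∀ᶠ i in l, w i ∈ closedBall (w i) T.rA :=
    .of_forall fun _ => mem_closedBall_self T.rA_pos.le
  have hdxB : Tendsto (fun i => T.dx (w i) (B i) (w i)) l (𝓝 0) := by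
    have := hh.tendsto_div_nhds_zero.sub (T.tendsto_dist_δ_div_sub_dx hK hε hw hBr hwr)
    rw [sub_zero] at this
    refine this.congr' ?_
    filter_upwards [hν, hB] with i hi hBi
    rw [hBi.2, T.δ_base _ _ hi.le, sub_sub_cancel]
  have hlim := (T.tendsto_dist_δ_div_sub_dx hK (T.tendsto_ν_mul_self hε) hw hBr hwr).add hdxB
  rw [zero_add] at hlim
  rw [isLittleO_iff_tendsto fun i h => absurd h (pow_pos (T.ν_pos _) 2).ne']
  refine hlim.congr' ?_
  filter_upwards [hν, hB, hBr] with i hi hBi hBri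
  have hνν : T.ν (ε i * ε i) ≤ 1 := by
    rw [T.ν_mul]; exact mul_le_one₀ hi.le (T.ν_pos _).le hi.le
  rw [← T.δ_comp _ _ _ hi.le hi.le _ hBri, hBi.2, T.δ_base _ _ hνν, T.ν_mul_self, sub_add_cancel]

theorem isLittleO_dist_δ_mul_self {x y z : X} (hy : y ∈ closedBall x T.rA)
    (hz : z ∈ closedBall x T.rA) (hε : Tendsto (fun i => T.ν (ε i)) l (𝓝 0)) :
    (fun i => dist (T.δ (ε i * ε i) x z) (T.δ (ε i * ε i) x y)) =o[l] (fun i => T.ν (ε i)) := by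
  have hlim := (T.tendsto_dist_δ_div hy hz (T.tendsto_ν_mul_self hε)).mul hε
  rw [mul_zero] at hlim
  rw [isLittleO_iff_tendsto fun i h => absurd h (T.ν_pos _).ne']
  refine hlim.congr fun i => ?_
  rw [T.ν_mul_self]
  field_simp [(T.ν_pos (ε i)).ne']

theorem isLittleO_lin {x y z : X} (hy : y ∈ closedBall x T.rA) (hz : z ∈ closedBall x T.rA)
    (hdx : T.dx x y x < 1) {e : ℕ → Γ} (he : Tendsto (fun n => T.ν (e n)) atTop (𝓝 0)) :
    (fun n => T.lin x (T.δ (e n) x y) (T.δ (e n) x z) (e n) (e n)) =o[atTop]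
      (fun n => T.ν (e n) ^ 2) := by
  set u := fun n => T.δ (e n) x y
  set v := fun n => T.δ (e n) x z
  set w := fun n => T.δ (e n) x (u n)
  set h := fun n => T.δ (e n) x (v n)
  have hν : ∀ᶠ n in atTop, T.ν (e n) ≤ 1 := he.eventually (ge_mem_nhds one_pos)
  have hu : Tendsto u atTop (𝓝 x) := T.tendsto_δ_s17 he (T.closedBall_subset_U x hy)
  have hv : Tendsto v atTop (𝓝 x) := T.tendsto_δ_s17 he (T.closedBall_subset_U x hz)
  have hw_eq : ∀ᶠ n in atTop, T.δ (e n * e n) x y = w n :=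
    hν.mono fun n hn => (T.δ_comp _ _ _ hn hn y hy).symm
  have hh_eq : ∀ᶠ n in atTop, T.δ (e n * e n) x z = h n :=
    hν.mono fun n hn => (T.δ_comp _ _ _ hn hn z hz).symm
  have hw : Tendsto w atTop (𝓝 x) :=
    (T.tendsto_δ_s17 (T.tendsto_ν_mul_self he) (T.closedBall_subset_U x hy)).congr' hw_eq
  have first : (fun n => dist (T.δ (e n) x (T.δ (e n) (u n) (v n))) (w n)) =o[atTop]
      (fun n => T.ν (e n) ^ 2) :=
    T.isLittleO_dist_δ_δ hy hdx he (T.isLittleO_dist_δ hu.isCompact_insert_range he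
      (.of_forall fun n => mem_insert_of_mem _ (mem_range_self n)) (by simpa using hv.dist hu))
  have hhw : (fun n => dist (h n) (w n)) =o[atTop] (fun n => T.ν (e n)) :=
    (T.isLittleO_dist_δ_mul_self hy hz he).congr'
      (by filter_upwards [hw_eq, hh_eq] with n hwn hhn; rw [hwn, hhn]) .rfl
  have second : (fun n => dist (T.δ (e n) (w n) (h n)) (w n)) =o[atTop]
      (fun n => T.ν (e n) ^ 2) := by
    obtain ⟨R, hR, ε₀, hε₀, hdom⟩ := T.domain_tech {x} isCompact_singleton
    refine T.isLittleO_dist_δ_of_mem_W hw.isCompact_insert_range he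
      (.of_forall fun n => mem_insert_of_mem _ (mem_range_self n)) ?_ hhw
    filter_upwards [he.eventually (gt_mem_nhds hε₀.1), hu.eventually (closedBall_mem_nhds x hR),
      hv.eventually (closedBall_mem_nhds x hR)] with n h1 h2 h3 using hdom x rfl _ h2 _ h3 _ h1
  refine (IsBigO.of_bound' (.of_forall fun n => ?_)).trans_isLittleO (first.add second)
  rw [lin, Real.norm_of_nonneg dist_nonneg,
    Real.norm_of_nonneg (add_nonneg dist_nonneg dist_nonneg)]
  exact dist_triangle_right _ _ _

end DilatationStructure

/-- **Theorem.**  Every strong dilatation structure is infinitesimally linear: for any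
`x, y, z` sufficiently closed, `lim_{ε→0} (1/ν ε ^ 2) Lin(x, δ_ε^x y, δ_ε^x z; ε, ε) = 0`. -/
theorem infinitesimally_linear (D : StrongDilatationStructure Γ X) :
    ∀ K : Set X, IsCompact K → ∃ C > 0, ∀ x ∈ K, ∀ y ∈ K, ∀ z ∈ K,
      dist x y ≤ C → dist x z ≤ C → dist y z ≤ C →
        ∀ η > 0, ∃ θ > 0, ∀ ε : Γ, D.ν ε < θ →
          (1 / (D.ν ε) ^ 2) *
            D.toDilatationStructure.lin x (D.δ ε x y) (D.δ ε x z) ε ε < η := by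
  intro K hK
  obtain ⟨r, hr, hdx⟩ := D.exists_pos_forall_dx_lt hK one_pos
  refine ⟨min (r / 2) D.rA, lt_min (half_pos hr) D.rA_pos, ?_⟩
  intro x hx y _ z _ hxy hxz _ η hη
  have hy : y ∈ closedBall x D.rA := mem_closedBall'.2 (hxy.trans (min_le_right _ _))
  have hz : z ∈ closedBall x D.rA := mem_closedBall'.2 (hxz.trans (min_le_right _ _))
  have hyx : D.dx x y x < 1 :=
    hdx x hx y (by rw [dist_comm]; linarith [min_le_left (r / 2) D.rA])
  refine exists_pos_forall_lt_of_forall_tendsto_comp (fun ε => (D.ν_pos ε).le)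
    (fun e he => ?_) hη
  simpa only [Function.comp_def, one_div_mul_eq_div] using
    (D.isLittleO_lin hy hz hyx he).tendsto_div_nhds_zero
end
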